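/- Let (X_i)_{1≤i≤n} be martingale differences with E[e^{|X_i|} | F_{i−1}] ≤ K a.s. for some K > 0. Set M_n = X_1 + ... + X_n. Then for all x > 0, P(M_n/n > x) ≤ exp(−n x²/(4K)) if x ∈ (0, 2K], and P(M_n/n > x) ≤ exp(−n(x − K)) if x > 2K. -/

import Mathlib

/-!
Conditionally on `ℱ (i - 1)`, the elementary inequality `exp (l t) ≤ 1 + l t + l² exp |t|`
(`0 ≤ l ≤ 1`) together with `E[X_i | ℱ (i - 1)] = 0` and `E[exp |X_i| | ℱ (i - 1)] ≤ K` gives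
`E[exp (l X_i) | ℱ (i - 1)] ≤ 1 + l² K`. Peeling off the last increment one step at a time yields
`E[exp (l M_n)] ≤ (1 + l² K)ⁿ ≤ exp (n l² K)`, and the Chernoff bound gives
`P(M_n / n > x) ≤ exp (n l² K - l n x)`. The choice `l = x / (2K)` is admissible exactly when
`x ≤ 2K`; beyond that the boundary value `l = 1` is used.
-/

open MeasureTheory Real
open scoped Nat

lemma Real.hasSum_pow_div_factorial (y : ℝ) : HasSum (fun k : ℕ => y ^ k / k !) (exp y) := by
  rw [Real.exp_eq_exp_ℝ]
  exact NormedSpace.expSeries_div_hasSum_exp y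

lemma Real.exp_mul_le_one_add_add_sq_mul_exp_abs (t : ℝ) {l : ℝ} (hl0 : 0 ≤ l) (hl1 : l ≤ 1) :
    exp (l * t) ≤ 1 + l * t + l ^ 2 * exp |t| := by
  have hterm (k : ℕ) (hk : k ∉ Finset.range 2) : (l * t) ^ k / k ! ≤ l ^ 2 * (|t| ^ k / k !) := by
    have hk2 : 2 ≤ k := not_lt.1 (Finset.mem_range.not.1 hk)
    rw [← mul_div_assoc]
    gcongr
    calc (l * t) ^ k ≤ |l * t| ^ k := (le_abs_self _).trans_eq (abs_pow _ _)
      _ = l ^ k * |t| ^ k := by rw [abs_mul, abs_of_nonneg hl0, mul_pow]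
      _ ≤ l ^ 2 * |t| ^ k := by gcongr ?_ * _; exact pow_le_pow_of_le_one hl0 hl1 hk2
  have hhead : l ^ 2 * (1 + |t|) - (1 + l * t) ≤ l ^ 2 * exp |t| - exp (l * t) := by
    simpa [Finset.sum_range_succ, mul_add] using sum_le_hasSum (Finset.range 2)
      (fun k hk => sub_nonneg.2 (hterm k hk))
      (((hasSum_pow_div_factorial |t|).mul_left (l ^ 2)).sub (hasSum_pow_div_factorial (l * t)))
  nlinarith [abs_nonneg t, sq_nonneg l]

section PullOut

variable {Ω : Type*} {m0 : MeasurableSpace Ω} {μ : Measure Ω} [IsFiniteMeasure μ]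
  {m : MeasurableSpace Ω} {h g : Ω → ℝ} {C : ℝ}

lemma integral_mul_le_of_condExp_le_of_bounded (hm : m ≤ m0) (hh : StronglyMeasurable[m] h)
    (hh_nonneg : 0 ≤ h) {c : ℝ} (hh_le : ∀ ω, h ω ≤ c) (hg : Integrable g μ)
    (hgC : ∀ᵐ ω ∂μ, μ[g | m] ω ≤ C) :
    ∫ ω, h ω * g ω ∂μ ≤ C * ∫ ω, h ω ∂μ := by
  have hh_bound : ∀ᵐ ω ∂μ, ‖h ω‖ ≤ c := .of_forall fun ω => by
    rw [norm_of_nonneg (hh_nonneg ω)]; exact hh_le ω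
  have hh_int : Integrable h μ := .of_bound (hh.mono hm).aestronglyMeasurable c hh_bound
  have hpull : μ[h * g | m] =ᵐ[μ] h * μ[g | m] :=
    condExp_stronglyMeasurable_mul_of_bound hm hh hg c hh_bound
  calc ∫ ω, h ω * g ω ∂μ = ∫ ω, (h * μ[g | m]) ω ∂μ := by
        rw [← integral_condExp hm]; exact integral_congr_ae hpull
    _ ≤ ∫ ω, C * h ω ∂μ := by
        refine integral_mono_ae (integrable_condExp.bdd_mul (hh.mono hm).aestronglyMeasurable
          hh_bound) (hh_int.const_mul C) ?_
        filter_upwards [hgC] with ω hω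
        rw [mul_comm C]
        exact mul_le_mul_of_nonneg_left hω (hh_nonneg ω)
    _ = C * ∫ ω, h ω ∂μ := integral_const_mul C _

/-- The pull-out property needs a bounded factor, so `h` is truncated at level `N` and the
truncation is removed by monotone convergence. -/
lemma lintegral_ofReal_mul_le_of_condExp_le (hm : m ≤ m0) (hh : StronglyMeasurable[m] h)
    (hh_nonneg : 0 ≤ h) (hh_int : Integrable h μ) (hg : Integrable g μ) (hg_nonneg : 0 ≤ g)
    (hC : 0 ≤ C) (hgC : ∀ᵐ ω ∂μ, μ[g | m] ω ≤ C) :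
    ∫⁻ ω, ENNReal.ofReal (h ω * g ω) ∂μ ≤ ENNReal.ofReal (C * ∫ ω, h ω ∂μ) := by
  set hN : ℕ → Ω → ℝ := fun N ω => min (h ω) N
  have hN_meas : ∀ N, StronglyMeasurable[m] (hN N) := fun N => hh.inf stronglyMeasurable_const
  have hN_nonneg (N : ℕ) : 0 ≤ hN N := fun ω => le_min (hh_nonneg ω) N.cast_nonneg
  have hN_int (N : ℕ) : Integrable (fun ω => hN N ω * g ω) μ :=
    hg.bdd_mul ((hN_meas N).mono hm).aestronglyMeasurable (c := N) (.of_forall fun ω => by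
      rw [norm_of_nonneg (hN_nonneg N ω)]; exact min_le_right _ _)
  have hN_tendsto (ω : Ω) : Filter.Tendsto (fun N => ENNReal.ofReal (hN N ω * g ω))
      Filter.atTop (nhds (ENNReal.ofReal (h ω * g ω))) := by
    refine tendsto_const_nhds.congr' ?_
    filter_upwards [Filter.eventually_ge_atTop ⌈h ω⌉₊] with N hN_ge
    simp only [hN, min_eq_left ((Nat.le_ceil _).trans (Nat.cast_le.2 hN_ge))]
  refine le_of_tendsto' (lintegral_tendsto_of_tendsto_of_monotone
    (fun N => (hN_int N).aemeasurable.ennreal_ofReal) (.of_forall fun ω N M hNM => ?_)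
    (.of_forall hN_tendsto)) fun N => ?_
  · exact ENNReal.ofReal_le_ofReal (mul_le_mul_of_nonneg_right
      (min_le_min le_rfl (Nat.cast_le.2 hNM)) (hg_nonneg ω))
  rw [← ofReal_integral_eq_lintegral_ofReal (hN_int N)
    (.of_forall fun ω => mul_nonneg (hN_nonneg N ω) (hg_nonneg ω))]
  refine ENNReal.ofReal_le_ofReal ((integral_mul_le_of_condExp_le_of_bounded hm (hN_meas N)
    (hN_nonneg N) (fun ω => min_le_right _ _) hg hgC).trans ?_)
  exact mul_le_mul_of_nonneg_left
    (integral_mono (hh_int.inf (integrable_const _)) hh_int fun ω => min_le_left _ _) hC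

lemma integrable_mul_and_integral_mul_le_of_condExp_le (hm : m ≤ m0)
    (hh : StronglyMeasurable[m] h) (hh_nonneg : 0 ≤ h) (hh_int : Integrable h μ)
    (hg : Integrable g μ) (hg_nonneg : 0 ≤ g) (hC : 0 ≤ C) (hgC : ∀ᵐ ω ∂μ, μ[g | m] ω ≤ C) :
    Integrable (fun ω => h ω * g ω) μ ∧ ∫ ω, h ω * g ω ∂μ ≤ C * ∫ ω, h ω ∂μ := by
  have hlint := lintegral_ofReal_mul_le_of_condExp_le hm hh hh_nonneg hh_int hg hg_nonneg hC hgC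
  have hhg_nonneg : 0 ≤ᵐ[μ] fun ω => h ω * g ω :=
    .of_forall fun ω => mul_nonneg (hh_nonneg ω) (hg_nonneg ω)
  refine ⟨⟨(hh.mono hm).aestronglyMeasurable.mul hg.1, ?_⟩, ?_⟩
  · rw [hasFiniteIntegral_iff_ofReal hhg_nonneg]
    exact hlint.trans_lt ENNReal.ofReal_lt_top
  · rw [integral_eq_lintegral_of_nonneg_ae hhg_nonneg
      ((hh.mono hm).aestronglyMeasurable.mul hg.1)]
    exact ENNReal.toReal_le_of_le_ofReal (mul_nonneg hC (integral_nonneg hh_nonneg)) hlint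

end PullOut

section OneStep

variable {Ω : Type*} {m0 : MeasurableSpace Ω} {μ : Measure Ω} {X : Ω → ℝ} {l : ℝ}

lemma integrable_exp_mul_of_integrable_exp_abs (hX : AEStronglyMeasurable X μ)
    (hexp : Integrable (fun ω => exp |X ω|) μ) (hl : |l| ≤ 1) :
    Integrable (fun ω => exp (l * X ω)) μ := by
  refine hexp.mono (continuous_exp.comp_aestronglyMeasurable (hX.const_mul l))
    (.of_forall fun ω => ?_)
  rw [norm_of_nonneg (exp_pos _).le, norm_of_nonneg (exp_pos _).le, exp_le_exp]
  calc l * X ω ≤ |l * X ω| := le_abs_self _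
    _ = |l| * |X ω| := abs_mul l (X ω)
    _ ≤ |X ω| := mul_le_of_le_one_left (abs_nonneg _) hl

variable [IsFiniteMeasure μ] {m : MeasurableSpace Ω}

lemma condExp_exp_mul_le (hm : m ≤ m0) (hX : Integrable X μ)
    (hexp : Integrable (fun ω => exp |X ω|) μ) (hl0 : 0 ≤ l) (hl1 : l ≤ 1)
    (hmd : μ[X | m] =ᵐ[μ] 0) {K : ℝ} (hK : ∀ᵐ ω ∂μ, μ[fun ω => exp |X ω| | m] ω ≤ K) :
    ∀ᵐ ω ∂μ, μ[fun ω => exp (l * X ω) | m] ω ≤ 1 + l ^ 2 * K := by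
  set E : Ω → ℝ := fun ω => exp |X ω|
  have hlin : μ[(fun _ => 1) + l • X + l ^ 2 • E | m] =ᵐ[μ]
      (fun _ => 1) + l • μ[X | m] + l ^ 2 • μ[E | m] :=
    (condExp_add ((integrable_const 1).add (hX.smul l)) (hexp.smul (l ^ 2)) m).trans
      (((condExp_add (integrable_const 1) (hX.smul l) m).trans
        (by rw [condExp_const hm]; exact (condExp_smul l X m).add_left)).add
        (condExp_smul (l ^ 2) E m))
  filter_upwards [condExp_mono (m := m)
      (integrable_exp_mul_of_integrable_exp_abs hX.1 hexp (abs_le.2 ⟨by linarith, hl1⟩))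
      (((integrable_const 1).add (hX.smul l)).add (hexp.smul (l ^ 2)))
      (.of_forall fun ω => exp_mul_le_one_add_add_sq_mul_exp_abs (X ω) hl0 hl1),
    hlin, hmd, hK] with ω hmono hlin hmd hK
  calc μ[fun ω => exp (l * X ω) | m] ω
      ≤ 1 + l * μ[X | m] ω + l ^ 2 * μ[E | m] ω := hmono.trans_eq hlin
    _ ≤ 1 + l ^ 2 * K := by rw [hmd, Pi.zero_apply]; nlinarith [sq_nonneg l]

end OneStep

section Martingale

variable {Ω : Type*} {m0 : MeasurableSpace Ω} {μ : Measure Ω} [IsProbabilityMeasure μ]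
  {ℱ : Filtration ℕ m0} {X : ℕ → Ω → ℝ} {K l : ℝ}

lemma stronglyMeasurable_sum_Icc (n : ℕ)
    (hadapted : ∀ i ∈ Finset.Icc 1 n, StronglyMeasurable[ℱ i] (X i)) :
    StronglyMeasurable[ℱ n] fun ω => ∑ i ∈ Finset.Icc 1 n, X i ω :=
  Finset.stronglyMeasurable_fun_sum _ fun i hi =>
    (hadapted i hi).mono (ℱ.mono (Finset.mem_Icc.1 hi).2)

lemma integrable_and_integral_exp_mul_sum_le (hK : 0 ≤ K) (hl0 : 0 ≤ l) (hl1 : l ≤ 1) (n : ℕ)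
    (hadapted : ∀ i ∈ Finset.Icc 1 n, StronglyMeasurable[ℱ i] (X i))
    (hint : ∀ i ∈ Finset.Icc 1 n, Integrable (X i) μ)
    (hmd : ∀ i ∈ Finset.Icc 1 n, μ[X i | ℱ (i - 1)] =ᵐ[μ] 0)
    (hexpint : ∀ i ∈ Finset.Icc 1 n, Integrable (fun ω => exp |X i ω|) μ)
    (hcond : ∀ i ∈ Finset.Icc 1 n, ∀ᵐ ω ∂μ, μ[fun ω => exp |X i ω| | ℱ (i - 1)] ω ≤ K) :
    Integrable (fun ω => exp (l * ∑ i ∈ Finset.Icc 1 n, X i ω)) μ ∧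
      ∫ ω, exp (l * ∑ i ∈ Finset.Icc 1 n, X i ω) ∂μ ≤ (1 + l ^ 2 * K) ^ n := by
  induction n with
  | zero => simp
  | succ n ih =>
    have hsub : Finset.Icc 1 n ⊆ Finset.Icc 1 (n + 1) := Finset.Icc_subset_Icc_right n.le_succ
    have hlast : n + 1 ∈ Finset.Icc 1 (n + 1) := Finset.mem_Icc.2 ⟨Nat.le_add_left 1 n, le_rfl⟩
    obtain ⟨ih_int, ih_le⟩ := ih (fun i hi => hadapted i (hsub hi)) (fun i hi => hint i (hsub hi))
      (fun i hi => hmd i (hsub hi)) (fun i hi => hexpint i (hsub hi))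
      (fun i hi => hcond i (hsub hi))
    have hstep := condExp_exp_mul_le (ℱ.le n) (hint _ hlast) (hexpint _ hlast) hl0 hl1
      (hmd _ hlast) (hcond _ hlast)
    obtain ⟨hprod_int, hprod_le⟩ := integrable_mul_and_integral_mul_le_of_condExp_le (ℱ.le n)
      (continuous_exp.comp_stronglyMeasurable
        ((stronglyMeasurable_sum_Icc n fun i hi => hadapted i (hsub hi)).const_mul l))
      (fun ω => (exp_pos _).le) ih_int
      (integrable_exp_mul_of_integrable_exp_abs (hint _ hlast).1 (hexpint _ hlast)
        (abs_le.2 ⟨by linarith, hl1⟩))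
      (fun ω => (exp_pos _).le) (by positivity) hstep
    have hsplit : (fun ω => exp (l * ∑ i ∈ Finset.Icc 1 (n + 1), X i ω)) =
        fun ω => exp (l * ∑ i ∈ Finset.Icc 1 n, X i ω) * exp (l * X (n + 1) ω) := by
      ext ω
      rw [Finset.sum_Icc_succ_top (Nat.le_add_left 1 n), mul_add, exp_add]
    rw [hsplit, pow_succ']
    exact ⟨hprod_int, hprod_le.trans (by gcongr)⟩

end Martingale

lemma measureReal_div_gt_le_exp_mul {Ω : Type*} {m0 : MeasurableSpace Ω} {μ : Measure Ω}
    [IsFiniteMeasure μ] {S : Ω → ℝ} {n : ℕ} {x l : ℝ} (hx : 0 ≤ x) (hl : 0 ≤ l)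
    (hS : Integrable (fun ω => exp (l * S ω)) μ) :
    μ.real {ω | S ω / n > x} ≤ exp (-l * (n * x)) * ∫ ω, exp (l * S ω) ∂μ := by
  have hsub : {ω | S ω / n > x} ⊆ {ω | n * x ≤ S ω} := by
    intro ω (hω : x < S ω / n)
    rcases n.eq_zero_or_pos with rfl | hn
    · rw [Nat.cast_zero, div_zero] at hω; linarith
    · exact ((lt_div_iff₀' (Nat.cast_pos.2 hn)).1 hω).le
  exact (measureReal_mono hsub).trans (ProbabilityTheory.measure_ge_le_exp_mul_mgf _ hl hS)

theorem stmt_4_general {Ω : Type*} {m0 : MeasurableSpace Ω} (μ : Measure Ω) [IsProbabilityMeasure μ]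
    (n : ℕ) (ℱ : MeasureTheory.Filtration ℕ m0)
    (X : ℕ → Ω → ℝ) (K : ℝ) (hK : 0 < K)
    (hadapted : ∀ i ∈ Finset.Icc 1 n, StronglyMeasurable[ℱ i] (X i))
    (hint : ∀ i ∈ Finset.Icc 1 n, Integrable (X i) μ)
    (hmd : ∀ i ∈ Finset.Icc 1 n, μ[X i | ℱ (i - 1)] =ᵐ[μ] 0)
    (hexpint : ∀ i ∈ Finset.Icc 1 n, Integrable (fun ω => Real.exp |X i ω|) μ)
    (hcond : ∀ i ∈ Finset.Icc 1 n,
      ∀ᵐ ω ∂μ, (μ[fun ω' => Real.exp |X i ω'| | ℱ (i - 1)]) ω ≤ K) :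
    ∀ x : ℝ, 0 < x →
      (x ≤ 2 * K →
        (μ {ω | (∑ i ∈ Finset.Icc 1 n, X i ω) / n > x}).toReal
          ≤ Real.exp (-(n * x ^ 2 / (4 * K)))) ∧
      (2 * K < x →
        (μ {ω | (∑ i ∈ Finset.Icc 1 n, X i ω) / n > x}).toReal
          ≤ Real.exp (-(n * (x - K)))) := by
  intro x hx
  have chernoff (l : ℝ) (hl0 : 0 ≤ l) (hl1 : l ≤ 1) :
      (μ {ω | (∑ i ∈ Finset.Icc 1 n, X i ω) / n > x}).toReal ≤
        exp (n * (l ^ 2 * K) - l * (n * x)) := by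
    obtain ⟨hS_int, hS_le⟩ := integrable_and_integral_exp_mul_sum_le hK.le hl0 hl1 n hadapted
      hint hmd hexpint hcond
    calc (μ {ω | (∑ i ∈ Finset.Icc 1 n, X i ω) / n > x}).toReal
        ≤ exp (-l * (n * x)) * (1 + l ^ 2 * K) ^ n :=
          (measureReal_div_gt_le_exp_mul hx.le hl0 hS_int).trans (by gcongr)
      _ ≤ exp (-l * (n * x)) * exp (l ^ 2 * K) ^ n := by
          gcongr
          linarith [add_one_le_exp (l ^ 2 * K)]
      _ = exp (n * (l ^ 2 * K) - l * (n * x)) := by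
          rw [← exp_nat_mul, ← exp_add]
          ring_nf
  refine ⟨fun hx2K => ?_, fun _ => ?_⟩
  · refine (chernoff (x / (2 * K)) (by positivity)
      ((div_le_one (by positivity)).2 hx2K)).trans_eq ?_
    congr 1
    field_simp
    ring
  · refine (chernoff 1 zero_le_one le_rfl).trans_eq ?_
    congr 1
    ring

theorem stmt_4 {Ω : Type*} {m0 : MeasurableSpace Ω} (μ : Measure Ω) [IsProbabilityMeasure μ]
    (n : ℕ) (ℱ : MeasureTheory.Filtration ℕ m0) (hF0 : ℱ 0 = ⊥)
    (X : ℕ → Ω → ℝ) (K : ℝ) (hK : 0 < K)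
    (hadapted : ∀ i ∈ Finset.Icc 1 n, StronglyMeasurable[ℱ i] (X i))
    (hint : ∀ i ∈ Finset.Icc 1 n, Integrable (X i) μ)
    (hmd : ∀ i ∈ Finset.Icc 1 n, μ[X i | ℱ (i - 1)] =ᵐ[μ] 0)
    (hexpint : ∀ i ∈ Finset.Icc 1 n, Integrable (fun ω => Real.exp |X i ω|) μ)
    (hcond : ∀ i ∈ Finset.Icc 1 n,
      ∀ᵐ ω ∂μ, (μ[fun ω' => Real.exp |X i ω'| | ℱ (i - 1)]) ω ≤ K) :
    ∀ x : ℝ, 0 < x →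
      (x ≤ 2 * K →
        (μ {ω | (∑ i ∈ Finset.Icc 1 n, X i ω) / n > x}).toReal
          ≤ Real.exp (-(n * x ^ 2 / (4 * K)))) ∧
      (2 * K < x →
        (μ {ω | (∑ i ∈ Finset.Icc 1 n, X i ω) / n > x}).toReal
          ≤ Real.exp (-(n * (x - K)))) :=
  stmt_4_general μ n ℱ X K hK hadapted hint hmd hexpint hcond
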